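/- Let L and L′ be complex Lie algebras admitting bases realizing the bracket patterns d₆(1,1) and d₆(1,0) respectively. Then L and L′ are isomorphic as Lie algebras over ℂ. -/

import Mathlib

/-!
In `d₆(1,q)` the basis `e₀ + e₁, -e₁, e₂, -e₄, -e₃` (the image of `e` under an involution) has
structure constants `d₆(1,1-q)`. A linear map matching bases with equal structure constants
preserves brackets by bilinearity, so Lie algebras realizing the same pattern are isomorphic;
`q = 0` gives the theorem.
-/

/-- `Realizes L c` means that the complex Lie algebra `L` admits a basis `e₁, …, e₅`
(indexed by `Fin 5`) in which the brackets of basis vectors are given by the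
structure constants `c`, i.e. `⁅eᵢ, eⱼ⁆ = ∑ₖ c i j k • eₖ` for all `i < j`,
all brackets of basis vectors being determined by these via antisymmetry. -/
def Realizes (L : Type) [LieRing L] [LieAlgebra ℂ L]
    (c : Fin 5 → Fin 5 → Fin 5 → ℂ) : Prop :=
  ∃ e : Module.Basis (Fin 5) ℂ L, ∀ i j : Fin 5, i < j →
    ⁅e i, e j⁆ = ∑ k, c i j k • e k

/-- The bracket pattern `d₆(p,q)`: `[e₂,e₄]=e₁+p·e₂`, `[e₃,e₄]=e₂+q·e₃`, `[e₁,e₅]=−p·e₁`, `[e₂,e₅]=e₁`, `[e₃,e₅]=e₂+(q−p)·e₃`, all other brackets zero. -/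
def d6 (p q : ℂ) : Fin 5 → Fin 5 → Fin 5 → ℂ := fun i j =>
  if i = 1 ∧ j = 3 then ![1, p, 0, 0, 0]
  else if i = 2 ∧ j = 3 then ![0, 1, q, 0, 0]
  else if i = 0 ∧ j = 4 then ![-p, 0, 0, 0, 0]
  else if i = 1 ∧ j = 4 then ![1, 0, 0, 0, 0]
  else if i = 2 ∧ j = 4 then ![0, 1, q - p, 0, 0]
  else 0

open Module

section BasisLie

variable {R ι L L' : Type*} [CommRing R] [LieRing L] [LieAlgebra R L] [LieRing L'] [LieAlgebra R L']

def LinearEquiv.toLieEquivOfBasis (g : L ≃ₗ[R] L') (b : Basis ι R L)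
    (h : ∀ i j, g ⁅b i, b j⁆ = ⁅g (b i), g (b j)⁆) : L ≃ₗ⁅R⁆ L' :=
  { g with
    map_lie' := fun {x y} => by
      have hB : (LieModule.toEnd R L L : L →ₗ[R] L →ₗ[R] L).compr₂ (g : L →ₗ[R] L') =
          (LieModule.toEnd R L' L' : L' →ₗ[R] L' →ₗ[R] L').compl₁₂ (g : L →ₗ[R] L') g :=
        LinearMap.ext_basis b b h
      exact LinearMap.congr_fun₂ hB x y }

theorem Module.Basis.nonempty_lieEquiv_of_lie_eq_sum [Fintype ι] [LinearOrder ι]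
    (c : ι → ι → ι → R) (b : Basis ι R L) (b' : Basis ι R L')
    (hb : ∀ i j, i < j → ⁅b i, b j⁆ = ∑ k, c i j k • b k)
    (hb' : ∀ i j, i < j → ⁅b' i, b' j⁆ = ∑ k, c i j k • b' k) :
    Nonempty (L ≃ₗ⁅R⁆ L') := by
  let g := b.equiv b' (Equiv.refl ι)
  have hg : ∀ i, g (b i) = b' i := fun i => b.equiv_apply i b' (Equiv.refl ι)
  have hsum : ∀ i j, i < j → g ⁅b i, b j⁆ = ⁅g (b i), g (b j)⁆ := fun i j hij => by
    simp only [hb i j hij, hb' i j hij, map_sum, map_smul, hg]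
  refine ⟨g.toLieEquivOfBasis b fun i j => ?_⟩
  rcases lt_trichotomy i j with hij | rfl | hji
  · exact hsum i j hij
  · simp only [lie_self, map_zero]
  · rw [← lie_skew, map_neg, hsum j i hji, lie_skew]

end BasisLie

theorem Realizes.nonempty_lieEquiv {L L' : Type} [LieRing L] [LieAlgebra ℂ L] [LieRing L']
    [LieAlgebra ℂ L'] {c : Fin 5 → Fin 5 → Fin 5 → ℂ} (hL : Realizes L c) (hL' : Realizes L' c) :
    Nonempty (L ≃ₗ⁅ℂ⁆ L') :=
  hL.elim fun e he => hL'.elim fun e' he' => e.nonempty_lieEquiv_of_lie_eq_sum c e' he he'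

section D6

variable {L : Type} [LieRing L] [LieAlgebra ℂ L]

structure IsD6Basis (p q : ℂ) (e : Basis (Fin 5) ℂ L) : Prop where
  lie_e0_e1 : ⁅e 0, e 1⁆ = 0
  lie_e0_e2 : ⁅e 0, e 2⁆ = 0
  lie_e0_e3 : ⁅e 0, e 3⁆ = 0
  lie_e0_e4 : ⁅e 0, e 4⁆ = -p • e 0
  lie_e1_e2 : ⁅e 1, e 2⁆ = 0
  lie_e1_e3 : ⁅e 1, e 3⁆ = e 0 + p • e 1
  lie_e1_e4 : ⁅e 1, e 4⁆ = e 0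
  lie_e2_e3 : ⁅e 2, e 3⁆ = e 1 + q • e 2
  lie_e2_e4 : ⁅e 2, e 4⁆ = e 1 + (q - p) • e 2
  lie_e3_e4 : ⁅e 3, e 4⁆ = 0

theorem realizes_d6_iff (p q : ℂ) :
    Realizes L (d6 p q) ↔ ∃ e : Basis (Fin 5) ℂ L, IsD6Basis p q e := by
  refine exists_congr fun e => ⟨fun he => ?_, fun he i j hij => ?_⟩
  · constructor <;> rw [he _ _ (by decide)] <;> simp [d6, Fin.sum_univ_five]
  · obtain ⟨h01, h02, h03, h04, h12, h13, h14, h23, h24, h34⟩ := he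
    fin_cases i <;> fin_cases j <;> simp at hij <;> simp [d6, Fin.sum_univ_five, *]

noncomputable def Module.Basis.d6FlipEnd (e : Basis (Fin 5) ℂ L) : L →ₗ[ℂ] L :=
  e.constr ℂ ![e 0 + e 1, -e 1, e 2, -e 4, -e 3]

theorem Module.Basis.d6FlipEnd_basis (e : Basis (Fin 5) ℂ L) (i : Fin 5) :
    e.d6FlipEnd (e i) = ![e 0 + e 1, -e 1, e 2, -e 4, -e 3] i :=
  e.constr_basis ℂ _ i

theorem Module.Basis.d6FlipEnd_involutive (e : Basis (Fin 5) ℂ L) :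
    Function.Involutive e.d6FlipEnd := by
  suffices h : e.d6FlipEnd ∘ₗ e.d6FlipEnd = LinearMap.id from LinearMap.congr_fun h
  refine e.ext fun i => ?_
  fin_cases i <;> simp [d6FlipEnd_basis]

noncomputable def Module.Basis.d6Flip (e : Basis (Fin 5) ℂ L) : Basis (Fin 5) ℂ L :=
  e.map (LinearEquiv.ofInvolutive e.d6FlipEnd e.d6FlipEnd_involutive)

theorem Module.Basis.d6Flip_eq (e : Basis (Fin 5) ℂ L) :
    e.d6Flip = ![e 0 + e 1, -e 1, e 2, -e 4, -e 3] := by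
  ext i
  simp [d6Flip, d6FlipEnd_basis]

theorem IsD6Basis.d6Flip {q : ℂ} {e : Basis (Fin 5) ℂ L} (he : IsD6Basis 1 q e) :
    IsD6Basis 1 (1 - q) e.d6Flip := by
  obtain ⟨h01, h02, h03, h04, h12, h13, h14, h23, h24, h34⟩ := he
  have h43 : ⁅e 4, e 3⁆ = 0 := by rw [← lie_skew, h34, neg_zero]
  constructor <;> simp [Module.Basis.d6Flip_eq, add_lie, *] <;> module

theorem realizes_d6_one_sub {q : ℂ} (h : Realizes L (d6 1 q)) : Realizes L (d6 1 (1 - q)) := by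
  obtain ⟨e, he⟩ := (realizes_d6_iff 1 q).1 h
  exact (realizes_d6_iff 1 (1 - q)).2 ⟨e.d6Flip, he.d6Flip⟩

end D6

/-- Lie algebras realizing the patterns `d₆(1,1)` and `d₆(1,0)` are
isomorphic. -/
theorem d6_11_iso_d6_10
    (L L' : Type) [LieRing L] [LieAlgebra ℂ L] [LieRing L'] [LieAlgebra ℂ L']
    (hL : Realizes L (d6 1 1)) (hL' : Realizes L' (d6 1 0)) :
    Nonempty (L ≃ₗ⁅ℂ⁆ L') := by
  have hL'₁ : Realizes L' (d6 1 1) := by simpa using realizes_d6_one_sub hL'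
  exact hL.nonempty_lieEquiv hL'₁
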